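/- arXiv:2603.16787 — 2 statements merged into one kernel-verified Lean document; each statement's English description precedes it below -/
import Mathlib

section
/- Let u ∈ C²([0,L]) solve -u'' + (u+c₀)^3 - (u+c₀) + ζ = 0 on (0,L) with u(0) = 0, u'(L) = 0, where ζ : [0,L] → ℝ satisfies -1 ≤ ζ ≤ 0 and c₀ ∈ (-1,0). Then -|c₀²-1| ≤ √2 · u'(0) ≤ √(5 - 4c₀ + (c₀²-1)²). -/
/-!
With the double-well potential `W v = v⁴/4 - v²/2`, the energy `E = u'²/2 - W(u + c₀)` satisfies
`E' = u' ζ` along solutions. Up to the first zero `x₁ ∈ (0, L]` of `u'` the sign of `u'` is that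
of `u'(0)`. If `u'(0) < 0`, then `E' ≥ 0` since `ζ ≤ 0`, so `E(0) ≤ E(x₁)` and `W ≥ -1/4` gives
`2 u'(0)² ≤ (c₀² - 1)²`. If `u'(0) > 0`, then `(E + u)' = u' (ζ + 1) ≥ 0` since `ζ ≥ -1`, and
`v - W v ≤ 3/2` gives `2 u'(0)² ≤ 5 - 4 c₀ + (c₀² - 1)²`.
-/

open Set

lemma exists_first_zero_of_pos {g : ℝ → ℝ} {a b : ℝ} (hab : a ≤ b) (hg : ContinuousOn g (Icc a b))
    (ha : 0 < g a) (hb : g b = 0) :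
    ∃ c ∈ Ioc a b, g c = 0 ∧ ∀ y ∈ Ico a c, 0 < g y := by
  set S := Icc a b ∩ g ⁻¹' {0}
  have hS : IsClosed S := hg.preimage_isClosed_of_isClosed isClosed_Icc isClosed_singleton
  have hSne : S.Nonempty := ⟨b, ⟨hab, le_rfl⟩, hb⟩
  have hSbdd : BddBelow S := ⟨a, fun x hx => hx.1.1⟩
  obtain ⟨⟨hac, hcb⟩, hc⟩ := hS.csInf_mem hSne hSbdd
  have hca : a ≠ sInf S := fun h => ha.ne' (h ▸ hc)
  refine ⟨sInf S, ⟨lt_of_le_of_ne hac hca, hcb⟩, hc, ?_⟩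
  rintro y ⟨hay, hyc⟩
  by_contra! hy
  obtain ⟨z, ⟨haz, hzy⟩, hz⟩ :=
    intermediate_value_Icc' hay (hg.mono (Icc_subset_Icc_right (hyc.le.trans hcb))) ⟨hy, ha.le⟩
  exact hyc.not_ge ((csInf_le hSbdd ⟨⟨haz, hzy.trans (hyc.le.trans hcb)⟩, hz⟩).trans hzy)

lemma le_of_hasDerivAt_nonneg {f f' : ℝ → ℝ} {a b : ℝ} (hab : a ≤ b) (hf : Continuous f)
    (hderiv : ∀ x ∈ Ioo a b, HasDerivAt f (f' x) x) (hnonneg : ∀ x ∈ Ioo a b, 0 ≤ f' x) :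
    f a ≤ f b := by
  have hmono : MonotoneOn f (Icc a b) := by
    refine monotoneOn_of_hasDerivWithinAt_nonneg (f' := f') (convex_Icc a b) hf.continuousOn
      (fun x hx => ?_) (fun x hx => ?_)
    · rw [interior_Icc] at hx ⊢
      exact (hderiv x hx).hasDerivWithinAt
    · rw [interior_Icc] at hx
      exact hnonneg x hx
  exact hmono (left_mem_Icc.2 hab) (right_mem_Icc.2 hab) hab

noncomputable def doubleWell (v : ℝ) : ℝ := v ^ 4 / 4 - v ^ 2 / 2

lemma hasDerivAt_doubleWell (v : ℝ) : HasDerivAt doubleWell (v ^ 3 - v) v := by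
  have h := ((hasDerivAt_pow 4 v).div_const 4).sub ((hasDerivAt_pow 2 v).div_const 2)
  exact h.congr_deriv (by ring)

lemma doubleWell_eq (v : ℝ) : doubleWell v = ((v ^ 2 - 1) ^ 2 - 1) / 4 := by
  unfold doubleWell
  ring

lemma neg_quarter_le_doubleWell (v : ℝ) : -1 / 4 ≤ doubleWell v := by
  rw [doubleWell_eq]
  nlinarith [sq_nonneg (v ^ 2 - 1)]

lemma sub_doubleWell_le (v : ℝ) : v - doubleWell v ≤ 3 / 2 := by
  unfold doubleWell
  nlinarith [sq_nonneg (v ^ 2 - v - 1), sq_nonneg (v - 1), sq_nonneg (v + 1)]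

noncomputable def energy (u : ℝ → ℝ) (c x : ℝ) : ℝ := deriv u x ^ 2 / 2 - doubleWell (u x + c)

section Shooting

variable {L c : ℝ} {ζ u : ℝ → ℝ}

lemma hasDerivAt_energy (hu : ContDiff ℝ 2 u) (x : ℝ) :
    HasDerivAt (energy u c)
      (deriv u x * (deriv (deriv u) x - ((u x + c) ^ 3 - (u x + c)))) x := by
  have hu' : HasDerivAt u (deriv u x) x :=
    (hu.differentiable (by norm_num)).differentiableAt.hasDerivAt
  have hu'' : HasDerivAt (deriv u) (deriv (deriv u) x) x :=
    hu.differentiable_deriv_two.differentiableAt.hasDerivAt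
  have h := ((hu''.pow 2).div_const 2).sub ((hasDerivAt_doubleWell _).comp x (hu'.add_const c))
  exact h.congr_deriv (by ring)

lemma continuous_energy (hu : ContDiff ℝ 2 u) : Continuous (energy u c) :=
  continuous_iff_continuousAt.2 fun x => (hasDerivAt_energy hu x).continuousAt

lemma hasDerivAt_energy_of_ode (hu : ContDiff ℝ 2 u)
    (hode : ∀ x ∈ Ioo 0 L, -deriv (deriv u) x + (u x + c) ^ 3 - (u x + c) + ζ x = 0)
    {x : ℝ} (hx : x ∈ Ioo 0 L) :
    HasDerivAt (energy u c) (deriv u x * ζ x) x := by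
  convert hasDerivAt_energy (c := c) hu x using 2
  linarith [hode x hx]

lemma two_mul_sq_deriv_le_of_neg (hu : ContDiff ℝ 2 u)
    (hode : ∀ x ∈ Ioo 0 L, -deriv (deriv u) x + (u x + c) ^ 3 - (u x + c) + ζ x = 0)
    (hL : 0 ≤ L) (hζ : ∀ x ∈ Icc 0 L, ζ x ≤ 0) (hu0 : u 0 = 0)
    (huL : deriv u L = 0) (hneg : deriv u 0 < 0) :
    2 * deriv u 0 ^ 2 ≤ (c ^ 2 - 1) ^ 2 := by
  obtain ⟨x₁, ⟨hx₁0, hx₁L⟩, hx₁, hsign⟩ :=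
    exists_first_zero_of_pos (g := fun x => -deriv u x) hL
      (hu.continuous_deriv (by norm_num)).neg.continuousOn (neg_pos.2 hneg) (by simp [huL])
  have hE : energy u c 0 ≤ energy u c x₁ :=
    le_of_hasDerivAt_nonneg hx₁0.le (continuous_energy hu)
      (fun x hx => hasDerivAt_energy_of_ode hu hode ⟨hx.1, hx.2.trans_le hx₁L⟩)
      (fun x hx => mul_nonneg_of_nonpos_of_nonpos (neg_pos.1 (hsign x ⟨hx.1.le, hx.2⟩)).le
        (hζ x ⟨hx.1.le, hx.2.le.trans hx₁L⟩))
  simp only [energy, hu0, neg_eq_zero.1 hx₁, zero_add, doubleWell_eq c] at hE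
  linarith [neg_quarter_le_doubleWell (u x₁ + c)]

lemma two_mul_sq_deriv_le_of_pos (hu : ContDiff ℝ 2 u)
    (hode : ∀ x ∈ Ioo 0 L, -deriv (deriv u) x + (u x + c) ^ 3 - (u x + c) + ζ x = 0)
    (hL : 0 ≤ L) (hζ : ∀ x ∈ Icc 0 L, -1 ≤ ζ x) (hu0 : u 0 = 0)
    (huL : deriv u L = 0) (hpos : 0 < deriv u 0) :
    2 * deriv u 0 ^ 2 ≤ 5 - 4 * c + (c ^ 2 - 1) ^ 2 := by
  obtain ⟨x₁, ⟨hx₁0, hx₁L⟩, hx₁, hsign⟩ :=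
    exists_first_zero_of_pos hL (hu.continuous_deriv (by norm_num)).continuousOn hpos huL
  have hu' : ∀ x, HasDerivAt u (deriv u x) x := fun x =>
    (hu.differentiable (by norm_num)).differentiableAt.hasDerivAt
  have hF : energy u c 0 + u 0 ≤ energy u c x₁ + u x₁ :=
    le_of_hasDerivAt_nonneg (f := fun x => energy u c x + u x) hx₁0.le
      ((continuous_energy hu).add hu.continuous)
      (fun x hx => (hasDerivAt_energy_of_ode hu hode ⟨hx.1, hx.2.trans_le hx₁L⟩).add (hu' x))
      (fun x hx => by
        have hζx := hζ x ⟨hx.1.le, hx.2.le.trans hx₁L⟩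
        nlinarith [hsign x ⟨hx.1.le, hx.2⟩])
  simp only [energy, hu0, hx₁, zero_add, doubleWell_eq c] at hF
  linarith [sub_doubleWell_le (u x₁ + c)]

end Shooting

theorem shooting_parameter_bounds_general (L c₀ : ℝ) (hL : 0 < L)
    (ζ : ℝ → ℝ)
    (hζ : ∀ x ∈ Icc 0 L, -1 ≤ ζ x ∧ ζ x ≤ 0)
    (u : ℝ → ℝ) (hu : ContDiff ℝ 2 u)
    (hode : ∀ x ∈ Ioo 0 L,
      -deriv (deriv u) x + (u x + c₀)^3 - (u x + c₀) + ζ x = 0)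
    (hu0 : u 0 = 0) (huL : deriv u L = 0) :
    -|c₀^2 - 1| ≤ Real.sqrt 2 * deriv u 0 ∧
      Real.sqrt 2 * deriv u 0 ≤ Real.sqrt (5 - 4*c₀ + (c₀^2 - 1)^2) := by
  have hsq : (Real.sqrt 2 * deriv u 0) ^ 2 = 2 * deriv u 0 ^ 2 := by
    rw [mul_pow, Real.sq_sqrt zero_le_two]
  rcases lt_trichotomy (deriv u 0) 0 with hneg | hzero | hpos
  · have hbound := Real.abs_le_sqrt (hsq ▸ two_mul_sq_deriv_le_of_neg hu hode hL.le
      (fun x hx => (hζ x hx).2) hu0 huL hneg)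
    rw [Real.sqrt_sq_eq_abs] at hbound
    exact ⟨neg_le_of_abs_le hbound,
      (mul_nonpos_of_nonneg_of_nonpos (Real.sqrt_nonneg 2) hneg.le).trans (Real.sqrt_nonneg _)⟩
  · simp [hzero]
  · have hbound := Real.abs_le_sqrt (hsq ▸ two_mul_sq_deriv_le_of_pos hu hode hL.le
      (fun x hx => (hζ x hx).1) hu0 huL hpos)
    exact ⟨(neg_nonpos.2 (abs_nonneg _)).trans (by positivity), (le_abs_self _).trans hbound⟩

theorem shooting_parameter_bounds (L c₀ : ℝ) (hL : 0 < L)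
    (hc₀ : c₀ ∈ Ioo (-1 : ℝ) 0)
    (ζ : ℝ → ℝ) (hζcont : Continuous ζ)
    (hζ : ∀ x ∈ Icc 0 L, -1 ≤ ζ x ∧ ζ x ≤ 0)
    (u : ℝ → ℝ) (hu : ContDiff ℝ 2 u)
    (hode : ∀ x ∈ Ioo 0 L,
      -deriv (deriv u) x + (u x + c₀)^3 - (u x + c₀) + ζ x = 0)
    (hu0 : u 0 = 0) (huL : deriv u L = 0) :
    -|c₀^2 - 1| ≤ Real.sqrt 2 * deriv u 0 ∧
      Real.sqrt 2 * deriv u 0 ≤ Real.sqrt (5 - 4*c₀ + (c₀^2 - 1)^2) :=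
  shooting_parameter_bounds_general L c₀ hL ζ hζ u hu hode hu0 huL
end

section
/- Let v ∈ C²([0,1]) satisfy -v'' + L²(v³ - v + ζ̃) = 0 on (0,1) with L > 0, -1 ≤ ζ̃ ≤ 0, and suppose v attains a local minimum at some y₂ ∈ (0,1). Then v(y₂) ≥ -1. -/
/-! At an interior local minimum `v'' ≥ 0`, so the equation gives `v³ - v ≥ -ζ ≥ 0`; since
`v³ - v = (v + 1) v (v - 1)` is negative on `(-∞, -1)`, this forces `v ≥ -1`. -/

open Set Filter Topology

/-- If `f'' a < 0`, the second derivative test makes `a` a local maximum as well, so `f` is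
constant near `a` and `f'' a = 0`. -/
theorem IsLocalMin.deriv_deriv_nonneg {f : ℝ → ℝ} {a : ℝ} (hmin : IsLocalMin f a)
    (hc : ContinuousAt f a) : 0 ≤ deriv (deriv f) a := by
  by_contra! hneg
  have hmax : IsLocalMax f a := isLocalMax_of_deriv_deriv_neg hneg hmin.deriv_eq_zero hc
  have hconst : f =ᶠ[𝓝 a] fun _ ↦ f a :=
    (hmin.and hmax).mono fun _ hx ↦ le_antisymm hx.2 hx.1
  have hderiv : deriv f =ᶠ[𝓝 a] fun _ ↦ 0 := by
    simpa only [deriv_const'] using hconst.deriv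
  rw [hderiv.deriv_eq, deriv_const] at hneg
  exact lt_irrefl 0 hneg

theorem neg_one_le_of_cube_sub_self_nonneg {R : Type*} [CommRing R] [LinearOrder R]
    [IsStrictOrderedRing R] {x : R} (h : 0 ≤ x ^ 3 - x) : -1 ≤ x := by
  by_contra! hx
  have hfactor : x ^ 3 - x = (x + 1) * (x * (x - 1)) := by ring
  have hneg : (x + 1) * (x * (x - 1)) < 0 :=
    mul_neg_of_neg_of_pos (by linarith) (mul_pos_of_neg_of_neg (by linarith) (by linarith))
  exact hneg.not_ge (hfactor ▸ h)

theorem min_bound_neg_one (L : ℝ) (hL : 0 < L)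
    (ζ : ℝ → ℝ) (hζ : ∀ y ∈ Icc (0:ℝ) 1, -1 ≤ ζ y ∧ ζ y ≤ 0)
    (v : ℝ → ℝ) (hv : ContDiff ℝ 2 v)
    (hode : ∀ y ∈ Ioo (0:ℝ) 1,
      -deriv (deriv v) y + L^2 * ((v y)^3 - v y + ζ y) = 0)
    (y₂ : ℝ) (hy₂ : y₂ ∈ Ioo (0:ℝ) 1) (hmin : IsLocalMin v y₂) :
    -1 ≤ v y₂ := by
  have hconvex : 0 ≤ deriv (deriv v) y₂ := hmin.deriv_deriv_nonneg hv.continuous.continuousAt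
  have hζ_nonpos : ζ y₂ ≤ 0 := (hζ y₂ (Ioo_subset_Icc_self hy₂)).2
  have hrhs : 0 ≤ (v y₂) ^ 3 - v y₂ + ζ y₂ :=
    (mul_nonneg_iff_of_pos_left (pow_pos hL 2)).mp (by linarith [hode y₂ hy₂])
  exact neg_one_le_of_cube_sub_self_nonneg (by linarith)
end
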